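/- Let f : ℕ → ℝ be increasing with f(n) ≥ 1, let t ≥ 1 be such that f(2^t · n) ≥ n · f(n) for all n ≥ 1, and define f'(n) = Σ_{i=0}^{t-1} n^(-i/t) · f(2^i n). Then f'(2n) ≥ (1/2) · n^(1/t) · f'(n) for all n ≥ 1. In particular f'(2n)/f'(n) → ∞ as n → ∞. -/

import Mathlib

/-!
Write `a i = n^(-i/t) f(2^i n)`, so that `f'(n) = ∑_{i<t} a i`. The regularity hypothesis says
exactly `a 0 ≤ a t`, hence shifting the index does not decrease the sum:
`f'(n) ≤ ∑_{i<t} n^(-(i+1)/t) f(2^(i+1) n)`. Multiplied by `n^(1/t) / 2`, the `i`-th term of the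
shifted sum is at most `(2n)^(-i/t) f(2^(i+1) n)`, the `i`-th term of `f'(2n)`, because
`2^(-i/t) ≥ 1/2` for `i ≤ t`.
-/

open Filter Finset

noncomputable def weightedDyadicSum (f : ℕ → ℝ) (t n : ℕ) : ℝ :=
  ∑ i ∈ range t, (n : ℝ) ^ (-(i : ℝ) / (t : ℝ)) * f (2 ^ i * n)

lemma sum_range_le_sum_range_succ {a : ℕ → ℝ} {t : ℕ} (h : a 0 ≤ a t) :
    ∑ i ∈ range t, a i ≤ ∑ i ∈ range t, a (i + 1) := by
  have := sum_range_sub a t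
  rw [sum_sub_distrib] at this
  linarith

lemma half_mul_rpow_mul_rpow_le {x : ℝ} (hx : 0 < x) {i t : ℕ} (hi : i ≤ t) :
    1 / 2 * x ^ ((1 : ℝ) / t) * x ^ (-((i + 1 : ℕ) : ℝ) / t) ≤ (2 * x) ^ (-(i : ℝ) / t) := by
  have hexp : (1 : ℝ) / t + -((i + 1 : ℕ) : ℝ) / t = -(i : ℝ) / t := by
    rw [← add_div]; push_cast; ring_nf
  have htwo : (2 : ℝ)⁻¹ ≤ 2 ^ (-(i : ℝ) / t) := by
    rw [← Real.rpow_neg_one]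
    refine Real.rpow_le_rpow_of_exponent_le one_le_two ?_
    rw [neg_div, neg_le_neg_iff]
    exact div_le_one_of_le₀ (by exact_mod_cast hi) t.cast_nonneg
  rw [mul_assoc, ← Real.rpow_add hx, hexp, Real.mul_rpow zero_le_two hx.le]
  have := Real.rpow_pos_of_pos hx (-(i : ℝ) / t)
  rw [one_div]
  gcongr

lemma weightedDyadicSum_le_sum_shift {f : ℕ → ℝ} {t n : ℕ} (ht : t ≠ 0) (hn : 0 < n)
    (hreg : (n : ℝ) * f n ≤ f (2 ^ t * n)) :
    weightedDyadicSum f t n ≤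
      ∑ i ∈ range t, (n : ℝ) ^ (-((i + 1 : ℕ) : ℝ) / t) * f (2 ^ (i + 1) * n) := by
  refine sum_range_le_sum_range_succ (a := fun i => (n : ℝ) ^ (-(i : ℝ) / t) * f (2 ^ i * n)) ?_
  have hnR : (0 : ℝ) < n := by exact_mod_cast hn
  have htR : (t : ℝ) ≠ 0 := by exact_mod_cast ht
  simp only [CharP.cast_eq_zero, neg_zero, zero_div, Real.rpow_zero, pow_zero, one_mul]
  rw [neg_div, div_self htR, Real.rpow_neg_one, ← div_eq_inv_mul, le_div_iff₀ hnR, mul_comm]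
  exact hreg

lemma half_rpow_mul_weightedDyadicSum_le {f : ℕ → ℝ} {t n : ℕ} (ht : t ≠ 0) (hn : 0 < n)
    (hf : ∀ m, 1 ≤ m → 0 ≤ f m) (hreg : (n : ℝ) * f n ≤ f (2 ^ t * n)) :
    1 / 2 * (n : ℝ) ^ ((1 : ℝ) / t) * weightedDyadicSum f t n ≤
      weightedDyadicSum f t (2 * n) := by
  have hnR : (0 : ℝ) < n := by exact_mod_cast hn
  refine (mul_le_mul_of_nonneg_left (weightedDyadicSum_le_sum_shift ht hn hreg)
    (by positivity)).trans ?_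
  rw [weightedDyadicSum, mul_sum]
  refine sum_le_sum fun i hi => ?_
  have hfi : 0 ≤ f (2 ^ (i + 1) * n) := hf _ (Nat.one_le_iff_ne_zero.mpr (by positivity))
  rw [← mul_assoc, show 2 ^ i * (2 * n) = 2 ^ (i + 1) * n by ring, Nat.cast_mul, Nat.cast_two]
  exact mul_le_mul_of_nonneg_right
    (half_mul_rpow_mul_rpow_le hnR (mem_range.mp hi).le) hfi

lemma weightedDyadicSum_pos {f : ℕ → ℝ} {t n : ℕ} (ht : t ≠ 0) (hn : 0 < n)
    (hf : ∀ m, 1 ≤ m → 0 < f m) : 0 < weightedDyadicSum f t n := by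
  have hnR : (0 : ℝ) < n := by exact_mod_cast hn
  refine sum_pos (fun i _ => mul_pos (Real.rpow_pos_of_pos hnR _) (hf _ ?_))
    ⟨0, mem_range.mpr (Nat.pos_of_ne_zero ht)⟩
  exact Nat.one_le_iff_ne_zero.mpr (by positivity)

theorem f'_ratio_tendsto_general (f : ℕ → ℝ) (t : ℕ)
    (hge1 : ∀ n : ℕ, 1 ≤ n → 1 ≤ f n)
    (ht : 1 ≤ t)
    (hreg : ∀ n : ℕ, 1 ≤ n → (n : ℝ) * f n ≤ f (2 ^ t * n))
    (f' : ℕ → ℝ)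
    (hf' : ∀ n : ℕ, f' n = ∑ i ∈ Finset.range t, (n : ℝ) ^ (-(i : ℝ) / (t : ℝ)) * f (2 ^ i * n)) :
    (∀ n : ℕ, 1 ≤ n → (1 / 2) * (n : ℝ) ^ ((1 : ℝ) / (t : ℝ)) * f' n ≤ f' (2 * n)) ∧
      Filter.Tendsto (fun n : ℕ => f' (2 * n) / f' n) Filter.atTop Filter.atTop := by
  obtain rfl : f' = weightedDyadicSum f t := funext hf'
  have ht0 : t ≠ 0 := Nat.one_le_iff_ne_zero.mp ht
  have key : ∀ n : ℕ, 1 ≤ n → 1 / 2 * (n : ℝ) ^ ((1 : ℝ) / t) * weightedDyadicSum f t n ≤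
      weightedDyadicSum f t (2 * n) := fun n hn =>
    half_rpow_mul_weightedDyadicSum_le ht0 hn (fun m hm => zero_le_one.trans (hge1 m hm))
      (hreg n hn)
  refine ⟨key, ?_⟩
  have hgrowth : Tendsto (fun n : ℕ => 1 / 2 * (n : ℝ) ^ ((1 : ℝ) / t)) atTop atTop :=
    ((tendsto_rpow_atTop (by positivity)).comp tendsto_natCast_atTop_atTop).const_mul_atTop
      (by norm_num)
  refine tendsto_atTop_mono' _ ?_ hgrowth
  filter_upwards [eventually_ge_atTop 1] with n hn
  rw [le_div_iff₀ (weightedDyadicSum_pos ht0 hn fun m hm => zero_lt_one.trans_le (hge1 m hm))]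
  exact key n hn

theorem f'_ratio_tendsto (f : ℕ → ℝ) (t : ℕ)
    (hmono : ∀ n : ℕ, f n ≤ f (n + 1))
    (hge1 : ∀ n : ℕ, 1 ≤ n → 1 ≤ f n)
    (ht : 1 ≤ t)
    (hreg : ∀ n : ℕ, 1 ≤ n → (n : ℝ) * f n ≤ f (2 ^ t * n))
    (f' : ℕ → ℝ)
    (hf' : ∀ n : ℕ, f' n = ∑ i ∈ Finset.range t, (n : ℝ) ^ (-(i : ℝ) / (t : ℝ)) * f (2 ^ i * n)) :
    (∀ n : ℕ, 1 ≤ n → (1 / 2) * (n : ℝ) ^ ((1 : ℝ) / (t : ℝ)) * f' n ≤ f' (2 * n)) ∧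
      Filter.Tendsto (fun n : ℕ => f' (2 * n) / f' n) Filter.atTop Filter.atTop :=
  f'_ratio_tendsto_general f t hge1 ht hreg f' hf'
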